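/- arXiv:1306.3703 — 7 statements merged into one kernel-verified Lean document; each statement's English description precedes it below -/
import Mathlib

section
/- If A is a nontrivial category (there exist two distinct parallel morphisms f, g : X → Y in A) and λ is the cardinality of the set of all morphisms of A, and A has a product of λ-many copies of Y, then hom(X, ∏_λ Y) has cardinality at least 2^λ; consequently no small category with all small products has two distinct parallel morphisms, i.e., every small complete category is a preorder. -/
open CategoryTheory CategoryTheory.Limits

lemma freyd_aux (A : Type u) [SmallCategory A] {X Y : A} (f g : X ⟶ Y) (hfg : f ≠ g)
    (ι : Type u) [HasProduct (fun _ : ι => Y)] :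
    (2 : Cardinal.{u}) ^ Cardinal.mk ι ≤ Cardinal.mk (X ⟶ ∏ᶜ (fun _ : ι => Y)) := by
  have h2 : Cardinal.mk (ULift.{u} Bool) = 2 := by simp
  rw [← h2, Cardinal.power_def]
  apply Cardinal.mk_le_of_injective
    (f := fun h : ι → ULift.{u} Bool => Pi.lift (fun i => if (h i).down then f else g))
  intro h₁ h₂ he
  funext i
  have heq : (if (h₁ i).down then f else g) = (if (h₂ i).down then f else g) := by
    have := congrArg (· ≫ Pi.π (fun _ : ι => Y) i) he
    simpa using this
  have hd : (h₁ i).down = (h₂ i).down := by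
    by_contra hne
    cases hb₁ : (h₁ i).down <;> cases hb₂ : (h₂ i).down <;>
      simp [hb₁, hb₂] at heq hne
    · exact hfg heq.symm
    · exact hfg heq
  exact ULift.ext _ _ hd

/-- Freyd's counting argument: if `A` is a small category with two distinct parallel
morphisms `f, g : X ⟶ Y`, `λ` is the set of all morphisms of `A`, and `A` has a product of
`λ`-many copies of `Y`, then `hom(X, ∏_λ Y)` has cardinality at least `2^λ`; consequently
every small category with all small products is a preorder. -/
theorem freyd_counting (A : Type u) [SmallCategory A] {X Y : A} (f g : X ⟶ Y) (hfg : f ≠ g)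
    [HasProduct (fun _ : Σ (P : A) (Q : A), P ⟶ Q => Y)] :
    (2 : Cardinal.{u}) ^ Cardinal.mk (Σ (P : A) (Q : A), P ⟶ Q) ≤
      Cardinal.mk (X ⟶ ∏ᶜ (fun _ : Σ (P : A) (Q : A), P ⟶ Q => Y)) ∧
    ∀ (B : Type u) (_ : SmallCategory B), (∀ J : Type u, HasProductsOfShape J B) →
      ∀ (P Q : B) (u v : P ⟶ Q), u = v := by
  constructor
  · exact freyd_aux A f g hfg _
  · intro B _ hB P Q u v
    by_contra huv
    haveI : HasProduct (fun _ : Σ (P : B) (Q : B), P ⟶ Q => Q) :=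
      (hB _).has_limit _
    have h1 := freyd_aux B u v huv (Σ (P : B) (Q : B), P ⟶ Q)
    have h2 : Cardinal.mk (P ⟶ ∏ᶜ (fun _ : Σ (P : B) (Q : B), P ⟶ Q => Q)) ≤
        Cardinal.mk (Σ (P : B) (Q : B), P ⟶ Q) :=
      Cardinal.mk_le_of_injective (f := fun m => ⟨P, _, m⟩)
        (fun a b hab => by simpa using hab)
    exact absurd (h1.trans h2) (not_le.mpr (Cardinal.cantor _))
end

section
/- Let W be a 2-category (or bicategory), a, b : X ⟶ C parallel 1-morphisms, and f, g : a ⟶ b two distinct parallel 2-morphisms. Suppose for a set λ the λ-fold 2-coproduct ∐_λ X exists with codiagonal ∇ : ∐_λ X ⟶ X, and the right Kan extension Ran_∇(b ∘ ∇) of b ∘ ∇ along ∇ exists. Then the set of 2-morphisms from a to Ran_∇(b ∘ ∇) has cardinality at least 2^λ. -/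
open CategoryTheory
open scoped CategoryTheory.Bicategory

universe w v u t

/-- 2-categorical Freyd counting lemma: let `a b : X ⟶ C` be parallel 1-morphisms in a
bicategory, `f g : a ⟶ b` distinct parallel 2-morphisms, `λ` a set such that the `λ`-fold
2-coproduct `P = ∐_λ X` exists with codiagonal `∇ : P ⟶ X` (so that 2-cells between
composites with `∇` correspond to `λ`-indexed families of 2-cells, whiskered 2-cells
corresponding to constant families), and suppose the right Kan extension `r = Ran_∇ (b ∘ ∇)`
exists (so `hom(h, r) ≅ hom(h ∘ ∇, b ∘ ∇)` naturally in `h`). Then the set of 2-morphisms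
`a ⟶ r` has cardinality at least `2^λ`. -/
theorem bicategorical_freyd_counting {B : Type u} [Bicategory.{w, v} B] {X C : B}
    (a b : X ⟶ C) (f g : a ⟶ b) (hfg : f ≠ g)
    (l : Type t) (P : B) (nabla : P ⟶ X)
    (hcop : ∀ u v : X ⟶ C, ∃ e : (nabla ≫ u ⟶ nabla ≫ v) ≃ (l → (u ⟶ v)),
      ∀ θ : u ⟶ v, e (nabla ◁ θ) = fun _ => θ)
    (r : X ⟶ C)
    (hran : ∃ e : ∀ h : X ⟶ C, (h ⟶ r) ≃ (nabla ≫ h ⟶ nabla ≫ b),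
      ∀ (h h' : X ⟶ C) (θ : h ⟶ h') (ψ : h' ⟶ r), e h (θ ≫ ψ) = (nabla ◁ θ) ≫ e h' ψ) :
    Cardinal.lift.{w} ((2 : Cardinal.{t}) ^ Cardinal.mk l) ≤
      Cardinal.lift.{t} (Cardinal.mk (a ⟶ r)) := by
  obtain ⟨e, -⟩ := hcop a b
  obtain ⟨E, -⟩ := hran
  have inj : Function.Injective
      (fun s : l → ULift.{t} Bool => (E a).symm ((e.symm) (fun i => if (s i).down then f else g))) := by
    intro s₁ s₂ h
    have h2 := (e.symm.injective ((E a).symm.injective h))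
    funext i
    have := congrFun h2 i
    apply ULift.ext; by_cases h1 : (s₁ i).down <;> by_cases h3 : (s₂ i).down <;> simp [h1, h3] at this ⊢ <;>
      first | exact (hfg this).elim | exact (hfg this.symm).elim
  have : (2 : Cardinal.{t}) ^ Cardinal.mk l = Cardinal.mk (l → ULift.{t} Bool) := by
    rw [← Cardinal.power_def, Cardinal.mk_uLift, Cardinal.mk_bool, Cardinal.lift_two]
  rw [this]
  exact Cardinal.lift_mk_le'.mpr ⟨⟨_, inj⟩⟩
end

section
/- If for every set X the diagonal functor Δ : A ⥤ A^X (into the X-fold power of A) has a right adjoint, then the small category A is a preorder. -/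
open CategoryTheory CategoryTheory.Limits

/-- If for every set `X` the diagonal functor `A ⥤ A^X` (into the `X`-fold power of `A`,
i.e. the functor category from the discrete category on `X` into `A`) has a right adjoint,
then the small category `A` is a preorder. -/
theorem preorder_of_diag_right_adjoints (A : Type u) [SmallCategory A]
    (h : ∀ X : Type u, ∃ R : (Discrete X ⥤ A) ⥤ A,
      Nonempty ((Functor.const (Discrete X) : A ⥤ Discrete X ⥤ A) ⊣ R)) :
    ∀ (P Q : A) (f g : P ⟶ Q), f = g := by
  intro P Q f g
  by_contra hfg
  -- X : the set of all arrows of A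
  set X : Type u := Σ a : A, Σ b : A, a ⟶ b with hX
  obtain ⟨R, ⟨adj⟩⟩ := h X
  let F : Discrete X ⥤ A := Discrete.functor fun _ => Q
  -- families of maps P ⟶ Q indexed by X inject into natural transformations Δ P ⟶ F
  let e : (X → (P ⟶ Q)) → ((Functor.const (Discrete X)).obj P ⟶ F) :=
    fun u => Discrete.natTrans fun x => u x.as
  have he : Function.Injective e := by
    intro u v huv
    funext x
    have := congrArg (fun t => t.app ⟨x⟩) huv
    simpa [e] using this
  -- hence families inject into P ⟶ R.obj F, which itself is an element of X
  let k : (X → (P ⟶ Q)) → X :=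
    fun u => ⟨P, R.obj F, adj.homEquiv P F (e u)⟩
  have hk : Function.Injective k := by
    intro u v huv
    simp only [k] at huv
    obtain ⟨-, huv⟩ := Sigma.ext_iff.mp huv
    obtain ⟨-, huv⟩ := Sigma.ext_iff.mp (eq_of_heq huv)
    exact he ((adj.homEquiv P F).injective (eq_of_heq huv))
  -- subsets of X inject into families, using f ≠ g
  haveI := Classical.propDecidable
  let j : Set X → (X → (P ⟶ Q)) := fun s x => if x ∈ s then f else g
  have hj : Function.Injective j := by
    intro s t hst
    ext x
    have hx := congrFun hst x
    constructor <;> intro hm <;> by_contra hn <;> simp [j, hm, hn] at hx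
    · exact hfg hx
    · exact hfg hx.symm
  exact Function.cantor_injective (k ∘ j) (hk.comp hj)
end

section
/- The category PER of partial equivalence relations on ℕ is cartesian closed: the product of PERs A and B is given by x (A×B) y iff π₁(x) A π₁(y) ∧ π₂(x) B π₂(y) under a recursive pairing, and the exponential by e (B^A) r iff ∀ a a', a A a' → e·a is defined, r·a' is defined, and (e·a) B (r·a'), under a fixed enumeration of partial recursive functions. -/
/-- A partial equivalence relation (PER) on ℕ: a symmetric and transitive relation. -/
structure PERN : Type where
  r : ℕ → ℕ → Prop
  symm : ∀ {a b}, r a b → r b a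
  trans : ∀ {a b c}, r a b → r b c → r a c

/-- Kleene application: evaluation of the `e`-th partial recursive function at `a`,
under the standard enumeration of codes. -/
def evalCode (e a : ℕ) : Part ℕ :=
  Nat.Partrec.Code.eval (Denumerable.ofNat Nat.Partrec.Code e) a

/-- The (code of a) partial recursive function `e` tracks a morphism of PERs `A → B`:
it maps `A`-related elements to defined, `B`-related values.  Morphisms of the category
`PER` are functions between quotients tracked by such codes. -/
def Tracks (A B : PERN) (e : ℕ) : Prop :=
  ∀ a a', A.r a a' → ∃ b ∈ evalCode e a, ∃ b' ∈ evalCode e a', B.r b b'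

/-- Two trackers determine the same morphism of PERs `C → D` (equal maps of quotients). -/
def ExtEq (C D : PERN) (h h' : ℕ) : Prop :=
  ∀ a, C.r a a → ∀ b ∈ evalCode h a, ∀ b' ∈ evalCode h' a, D.r b b'

/-- `e₂ ∘ e₁ = f` as morphisms of PERs `C → B`. -/
def CompEq (C B : PERN) (e₂ e₁ f : ℕ) : Prop :=
  ∀ a, C.r a a → ∀ v ∈ evalCode e₁ a, ∀ u ∈ evalCode e₂ v, ∀ w ∈ evalCode f a, B.r u w

/-- The product PER: `x (A × B) y iff π₁ x A π₁ y ∧ π₂ x B π₂ y` under the recursive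
pairing `Nat.pair`/`Nat.unpair`. -/
def prodPER (A B : PERN) : PERN where
  r x y := A.r x.unpair.1 y.unpair.1 ∧ B.r x.unpair.2 y.unpair.2
  symm := fun h => ⟨A.symm h.1, B.symm h.2⟩
  trans := fun h h' => ⟨A.trans h.1 h'.1, B.trans h.2 h'.2⟩

/-- The exponential PER: `e (B^A) r iff ∀ a a', a A a' → e·a and r·a' are defined and
(e·a) B (r·a')`. -/
def expPER (A B : PERN) : PERN where
  r e r' := ∀ a a', A.r a a' → ∃ b ∈ evalCode e a, ∃ b' ∈ evalCode r' a', B.r b b'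
  symm := by
    intro e r' h a a' haa'
    obtain ⟨b, hb, b', hb', hB⟩ := h a' a (PERN.symm _ haa')
    exact ⟨b', hb', b, hb, PERN.symm _ hB⟩
  trans := by
    intro e r' s h1 h2 a a' haa'
    obtain ⟨b, hb, b', hb', hB⟩ := h1 a a' haa'
    obtain ⟨c, hc, c', hc', hB'⟩ := h2 a' a' (PERN.trans _ (PERN.symm _ haa') haa')
    refine ⟨b, hb, c', hc', ?_⟩
    exact PERN.trans _ hB (by rwa [Part.mem_unique hc hb'] at hB')

/-!
PER is a realizability category, so every structure map is realized by an explicit code.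
The terminal PER relates everything, and any constant code realizes the unique map into it.
Pairing and the two projections are realized by the codes `pair`, `left` and `right`;
evaluation by a universal code for `(e, x) ↦ e·x`; and the transpose of `f : C × A → B` by
`a ↦ curry f a`, the s-m-n theorem. Every uniqueness statement holds because morphisms are
compared only on related inputs, where all relevant values are defined and related.
-/

open Nat.Partrec Encodable

lemma evalCode_encode (c : Code) (a : ℕ) : evalCode (encode c) a = c.eval a := by
  rw [evalCode, Denumerable.ofNat_encode]

lemma exists_evalCode_eq_of_partrec {f : ℕ →. ℕ} (hf : Partrec f) :
    ∃ e, ∀ a, evalCode e a = f a := by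
  obtain ⟨c, hc⟩ := Code.exists_code.1 (Partrec.nat_iff.1 hf)
  exact ⟨encode c, fun a => by rw [evalCode_encode, hc]⟩

lemma exists_evalCode_eq_some_of_computable {f : ℕ → ℕ} (hf : Computable f) :
    ∃ e, ∀ a, evalCode e a = Part.some (f a) :=
  exists_evalCode_eq_of_partrec hf

lemma PERN.refl_left (A : PERN) {a a' : ℕ} (h : A.r a a') : A.r a a :=
  A.trans h (A.symm h)

lemma Tracks.rel_of_mem {C D : PERN} {e a b b' : ℕ} (he : Tracks C D e) (ha : C.r a a)
    (hb : b ∈ evalCode e a) (hb' : b' ∈ evalCode e a) : D.r b b' := by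
  obtain ⟨c, hc, c', hc', hD⟩ := he a a ha
  rwa [Part.mem_unique hb hc, Part.mem_unique hb' hc']

lemma tracks_of_evalCode_eq_some {A B : PERN} {e : ℕ} {f : ℕ → ℕ}
    (he : ∀ a, evalCode e a = Part.some (f a)) (hf : ∀ a a', A.r a a' → B.r (f a) (f a')) :
    Tracks A B e :=
  fun a a' h => ⟨f a, by simp [he], f a', by simp [he], hf a a' h⟩

@[simp]
lemma prodPER_r_pair {A B : PERN} {a b a' b' : ℕ} :
    (prodPER A B).r (Nat.pair a b) (Nat.pair a' b') ↔ A.r a a' ∧ B.r b b' := by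
  simp [prodPER]

def unitPER : PERN where
  r _ _ := True
  symm _ := trivial
  trans _ _ := trivial

lemma tracks_unitPER_zero (A : PERN) : Tracks A unitPER (encode Code.zero) :=
  tracks_of_evalCode_eq_some (f := fun _ => 0) (fun _ => evalCode_encode _ _)
    fun _ _ _ => trivial

lemma extEq_unitPER (A : PERN) (u u' : ℕ) : ExtEq A unitPER u u' :=
  fun _ _ _ _ _ _ => trivial

section Product

variable {A B C : PERN}

def fstCode : ℕ := encode Code.left

def sndCode : ℕ := encode Code.right

@[simp]
lemma evalCode_fstCode (n : ℕ) : evalCode fstCode n = Part.some n.unpair.1 :=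
  evalCode_encode _ _

@[simp]
lemma evalCode_sndCode (n : ℕ) : evalCode sndCode n = Part.some n.unpair.2 :=
  evalCode_encode _ _

lemma tracks_fstCode : Tracks (prodPER A B) A fstCode :=
  tracks_of_evalCode_eq_some evalCode_fstCode fun _ _ h => h.1

lemma tracks_sndCode : Tracks (prodPER A B) B sndCode :=
  tracks_of_evalCode_eq_some evalCode_sndCode fun _ _ h => h.2

lemma rel_of_mem_evalCode_fstCode {n b : ℕ} (hn : (prodPER A B).r n n)
    (hb : b ∈ evalCode fstCode n) : A.r b n.unpair.1 := by
  rw [evalCode_fstCode, Part.mem_some_iff] at hb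
  exact hb ▸ hn.1

lemma rel_of_mem_evalCode_sndCode {n b : ℕ} (hn : (prodPER A B).r n n)
    (hb : b ∈ evalCode sndCode n) : B.r b n.unpair.2 := by
  rw [evalCode_sndCode, Part.mem_some_iff] at hb
  exact hb ▸ hn.2

def pairCode (f g : ℕ) : ℕ :=
  encode (Code.pair (Denumerable.ofNat Code f) (Denumerable.ofNat Code g))

lemma mem_evalCode_pairCode {f g a v : ℕ} :
    v ∈ evalCode (pairCode f g) a ↔
      ∃ x ∈ evalCode f a, ∃ y ∈ evalCode g a, v = Nat.pair x y := by
  rw [pairCode, evalCode_encode]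
  simp [Code.eval, Seq.seq, evalCode, eq_comm]

lemma Tracks.pairCode {f g : ℕ} (hf : Tracks C A f) (hg : Tracks C B g) :
    Tracks C (prodPER A B) (pairCode f g) := by
  intro a a' h
  obtain ⟨x, hx, x', hx', hA⟩ := hf a a' h
  obtain ⟨y, hy, y', hy', hB⟩ := hg a a' h
  exact ⟨_, mem_evalCode_pairCode.2 ⟨x, hx, y, hy, rfl⟩,
    _, mem_evalCode_pairCode.2 ⟨x', hx', y', hy', rfl⟩, prodPER_r_pair.2 ⟨hA, hB⟩⟩

lemma compEq_fstCode_pairCode {f : ℕ} (g : ℕ) (hf : Tracks C A f) :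
    CompEq C A fstCode (pairCode f g) f := by
  intro a ha v hv u hu w hw
  obtain ⟨x, hx, y, -, rfl⟩ := mem_evalCode_pairCode.1 hv
  rw [evalCode_fstCode, Nat.unpair_pair, Part.mem_some_iff] at hu
  exact hu ▸ hf.rel_of_mem ha hx hw

lemma compEq_sndCode_pairCode (f : ℕ) {g : ℕ} (hg : Tracks C B g) :
    CompEq C B sndCode (pairCode f g) g := by
  intro a ha v hv u hu w hw
  obtain ⟨x, -, y, hy, rfl⟩ := mem_evalCode_pairCode.1 hv
  rw [evalCode_sndCode, Nat.unpair_pair, Part.mem_some_iff] at hu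
  exact hu ▸ hg.rel_of_mem ha hy hw

lemma extEq_pairCode {f g h : ℕ} (h₁ : CompEq C A fstCode h f)
    (h₂ : CompEq C B sndCode h g) : ExtEq C (prodPER A B) h (pairCode f g) := by
  intro a ha b hb v hv
  obtain ⟨x, hx, y, hy, rfl⟩ := mem_evalCode_pairCode.1 hv
  simp only [prodPER, Nat.unpair_pair]
  exact ⟨h₁ a ha b hb _ (by simp) x hx, h₂ a ha b hb _ (by simp) y hy⟩

end Product

section Exponential

variable {A B C : PERN}

lemma exists_evalCode_eq_apply :
    ∃ u, ∀ n, evalCode u n = evalCode n.unpair.1 n.unpair.2 :=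
  exists_evalCode_eq_of_partrec <| Code.eval_part.comp
    ((Computable.ofNat _).comp (Primrec.fst.comp Primrec.unpair).to_comp)
    (Primrec.snd.comp Primrec.unpair).to_comp

noncomputable def evCode : ℕ := Classical.choose exists_evalCode_eq_apply

lemma evalCode_evCode (n : ℕ) : evalCode evCode n = evalCode n.unpair.1 n.unpair.2 :=
  Classical.choose_spec exists_evalCode_eq_apply n

@[simp]
lemma evalCode_evCode_pair (e x : ℕ) : evalCode evCode (Nat.pair e x) = evalCode e x := by
  rw [evalCode_evCode, Nat.unpair_pair]

lemma tracks_evCode : Tracks (prodPER (expPER A B) A) B evCode := by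
  intro n n' h
  simpa only [evalCode_evCode] using h.1 _ _ h.2

lemma rel_of_mem_evalCode_evCode {n b b' : ℕ} (hn : (prodPER (expPER A B) A).r n n)
    (hb : b ∈ evalCode evCode n) (hb' : b' ∈ evalCode n.unpair.1 n.unpair.2) : B.r b b' := by
  rw [evalCode_evCode] at hb
  obtain ⟨c, hc, c', hc', hB⟩ := hn.1 _ _ hn.2
  rwa [Part.mem_unique hb hc, Part.mem_unique hb' hc']

def curryCode (f a : ℕ) : ℕ := encode ((Denumerable.ofNat Code f).curry a)

@[simp]
lemma evalCode_curryCode (f a x : ℕ) :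
    evalCode (curryCode f a) x = evalCode f (Nat.pair a x) := by
  rw [curryCode, evalCode_encode, Code.eval_curry, evalCode]

lemma computable_curryCode (f : ℕ) : Computable (curryCode f) :=
  (Primrec.encode.comp (Code.primrec₂_curry.comp (Primrec.const _) Primrec.id)).to_comp

noncomputable def lamCode (f : ℕ) : ℕ :=
  Classical.choose (exists_evalCode_eq_some_of_computable (computable_curryCode f))

@[simp]
lemma evalCode_lamCode (f a : ℕ) : evalCode (lamCode f) a = Part.some (curryCode f a) :=
  Classical.choose_spec (exists_evalCode_eq_some_of_computable (computable_curryCode f)) a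

lemma Tracks.lamCode {f : ℕ} (hf : Tracks (prodPER C A) B f) :
    Tracks C (expPER A B) (lamCode f) :=
  tracks_of_evalCode_eq_some (evalCode_lamCode f) fun a a' ha x x' hx => by
    simpa using hf _ _ (prodPER_r_pair.2 ⟨ha, hx⟩)

lemma evCode_lamCode {f : ℕ} (hf : Tracks (prodPER C A) B f) {a x e b b' : ℕ}
    (ha : C.r a a) (hx : A.r x x) (he : e ∈ evalCode (lamCode f) a)
    (hb : b ∈ evalCode evCode (Nat.pair e x)) (hb' : b' ∈ evalCode f (Nat.pair a x)) :
    B.r b b' := by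
  rw [evalCode_lamCode, Part.mem_some_iff] at he
  subst he
  rw [evalCode_evCode_pair, evalCode_curryCode] at hb
  exact hf.rel_of_mem (prodPER_r_pair.2 ⟨ha, hx⟩) hb hb'

lemma extEq_lamCode {f h : ℕ} (hf : Tracks (prodPER C A) B f) (hh : Tracks C (expPER A B) h)
    (htri : ∀ a x, C.r a a → A.r x x → ∀ e ∈ evalCode h a,
      ∀ b ∈ evalCode evCode (Nat.pair e x), ∀ b' ∈ evalCode f (Nat.pair a x), B.r b b') :
    ExtEq C (expPER A B) h (lamCode f) := by
  intro a ha e he e' he' x x' hxx'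
  rw [evalCode_lamCode, Part.mem_some_iff] at he'
  subst he'
  obtain ⟨b, hb, -, -, -⟩ := hh.rel_of_mem ha he he x x (A.refl_left hxx')
  obtain ⟨u, hu, u', hu', hB⟩ := hf _ _ (prodPER_r_pair.2 ⟨ha, hxx'⟩)
  have hbu : B.r b u := htri a x ha (A.refl_left hxx') e he b (by simpa using hb) u hu
  exact ⟨b, hb, u', by simpa using hu', B.trans hbu hB⟩

end Exponential

/-- The category `PER` of partial equivalence relations on ℕ is cartesian closed:
it has a terminal object, binary products given by `prodPER` (with projections computing
the recursive unpairing), and exponentials given by `expPER` (with Kleene application as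
evaluation), each satisfying the appropriate universal property up to equality of morphisms
(i.e. up to `ExtEq`). -/
theorem PER_cartesianClosed :
    (∃ T : PERN, ∀ A : PERN, ∃ u, Tracks A T u ∧
      ∀ u', Tracks A T u' → ExtEq A T u u') ∧
    (∀ A B : PERN, ∃ p₁ p₂ : ℕ,
      Tracks (prodPER A B) A p₁ ∧ Tracks (prodPER A B) B p₂ ∧
      (∀ n, (prodPER A B).r n n → ∀ b ∈ evalCode p₁ n, A.r b n.unpair.1) ∧
      (∀ n, (prodPER A B).r n n → ∀ b ∈ evalCode p₂ n, B.r b n.unpair.2) ∧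
      ∀ (C : PERN) (f' g' : ℕ), Tracks C A f' → Tracks C B g' →
        ∃ h, Tracks C (prodPER A B) h ∧ CompEq C A p₁ h f' ∧ CompEq C B p₂ h g' ∧
          ∀ h', Tracks C (prodPER A B) h' → CompEq C A p₁ h' f' → CompEq C B p₂ h' g' →
            ExtEq C (prodPER A B) h' h) ∧
    (∀ A B : PERN, ∃ ev : ℕ,
      Tracks (prodPER (expPER A B) A) B ev ∧
      (∀ n, (prodPER (expPER A B) A).r n n → ∀ b ∈ evalCode ev n,
        ∀ b' ∈ evalCode n.unpair.1 n.unpair.2, B.r b b') ∧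
      ∀ (C : PERN) (f' : ℕ), Tracks (prodPER C A) B f' →
        ∃ h, Tracks C (expPER A B) h ∧
          (∀ a x, C.r a a → A.r x x → ∀ e ∈ evalCode h a, ∀ b ∈ evalCode ev (Nat.pair e x),
            ∀ b' ∈ evalCode f' (Nat.pair a x), B.r b b') ∧
          ∀ h', Tracks C (expPER A B) h' →
            (∀ a x, C.r a a → A.r x x → ∀ e ∈ evalCode h' a, ∀ b ∈ evalCode ev (Nat.pair e x),
              ∀ b' ∈ evalCode f' (Nat.pair a x), B.r b b') →
            ExtEq C (expPER A B) h' h) := by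
  refine ⟨⟨unitPER, fun A => ⟨_, tracks_unitPER_zero A, fun u _ => extEq_unitPER A _ u⟩⟩,
    fun A B => ⟨fstCode, sndCode, tracks_fstCode, tracks_sndCode,
      fun _ hn _ => rel_of_mem_evalCode_fstCode hn,
      fun _ hn _ => rel_of_mem_evalCode_sndCode hn,
      fun C f g hf hg => ⟨pairCode f g, hf.pairCode hg, compEq_fstCode_pairCode g hf,
        compEq_sndCode_pairCode f hg, fun _ _ h₁ h₂ => extEq_pairCode h₁ h₂⟩⟩,
    fun A B => ⟨evCode, tracks_evCode,
      fun _ hn _ hb _ hb' => rel_of_mem_evalCode_evCode hn hb hb',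
      fun C f hf => ⟨lamCode f, hf.lamCode, fun _ _ ha hx _ he _ hb _ hb' =>
        evCode_lamCode hf ha hx he hb hb', fun _ hh htri => extEq_lamCode hf hh htri⟩⟩⟩
end

section
/- The category PER of partial equivalence relations on ℕ has all intersection-indexed products of uniform families: given a set X and a family σ : X → PER of PERs, the PER ⋂_{x∈X} σ(x) (the intersection of relations) together with identity-tracked projections is the product in the ω-set-enriched sense: every PER τ and every family of morphisms τ → σ(x) all tracked by the same partial recursive function e factors uniquely through ⋂_{x∈X} σ(x). -/
/-- The intersection of a family of PERs. -/
def interPER (X : Type) (σ : X → PERN) : PERN where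
  r n m := ∀ x : X, (σ x).r n m
  symm := fun h x => (σ x).symm (h x)
  trans := fun h h' x => (σ x).trans (h x) (h' x)

lemma evalCode_id (n : ℕ) : n ∈ evalCode (Encodable.encode Nat.Partrec.Code.id) n := by
  simp [evalCode, Nat.Partrec.Code.eval_id]

/-- The category `PER` has intersection-indexed products of uniform families: for a set `X`
and a family `σ : X → PER`, the intersection `⋂_{x∈X} σ(x)` with identity-tracked
projections is the product in the ω-set-enriched sense: there is a single (identity) code
tracking all projections, and every PER `τ` with a family of morphisms `τ → σ(x)` all
tracked by the same partial recursive code `e` factors through `⋂_{x∈X} σ(x)`, uniquely up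
to equality of morphisms. -/
theorem PER_intersection_products (X : Type) (σ : X → PERN) :
    (∃ i : ℕ, (∀ n : ℕ, n ∈ evalCode i n) ∧ ∀ x : X, Tracks (interPER X σ) (σ x) i) ∧
    (∀ (τ : PERN) (e : ℕ), (∀ x : X, Tracks τ (σ x) e) →
      ∃ h, Tracks τ (interPER X σ) h ∧ (∀ x : X, ExtEq τ (σ x) h e) ∧
        ∀ h', Tracks τ (interPER X σ) h' → (∀ x : X, ExtEq τ (σ x) h' e) →
          ExtEq τ (interPER X σ) h' h) := by
  constructor
  · exact ⟨Encodable.encode Nat.Partrec.Code.id, evalCode_id,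
      fun x a a' hr => ⟨a, evalCode_id a, a', evalCode_id a', hr x⟩⟩
  · intro τ e he
    by_cases hX : Nonempty X
    · refine ⟨e, ?_, ?_, ?_⟩
      · intro a a' hr
        obtain ⟨x⟩ := hX
        obtain ⟨b, hb, b', hb', _⟩ := he x a a' hr
        refine ⟨b, hb, b', hb', fun y => ?_⟩
        obtain ⟨c, hc, c', hc', hrel⟩ := he y a a' hr
        rwa [Part.mem_unique hb hc, Part.mem_unique hb' hc']
      · intro x a ha b hb b' hb'
        obtain ⟨c, hc, c', hc', hrel⟩ := he x a a ha
        rwa [Part.mem_unique hb hc, Part.mem_unique hb' hc']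
      · intro h' _ hext a ha b hb b' hb' x
        exact hext x a ha b hb b' hb'
    · refine ⟨Encodable.encode Nat.Partrec.Code.id, ?_, fun x => (hX ⟨x⟩).elim, ?_⟩
      · intro a a' _
        exact ⟨a, evalCode_id a, a', evalCode_id a', fun x => (hX ⟨x⟩).elim⟩
      · intro h' _ _ a _ b _ b' _ x
        exact (hX ⟨x⟩).elim
end

section
/- The category of ω-sets does not have countably infinite coproducts of the terminal object: there is no ω-set serving as the coproduct ∐_{n∈ℕ} 1. -/
/-- An ω-set: a set together with a nonempty set of natural-number realizers for each
element. -/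
structure OmegaSet : Type 1 where
  carrier : Type
  R : ℕ → carrier → Prop
  real_nonempty : ∀ x : carrier, ∃ n, R n x

/-- A morphism of ω-sets: a function on underlying sets tracked by a partial recursive
function on realizers. -/
def IsMor (X Y : OmegaSet) (f : X.carrier → Y.carrier) : Prop :=
  ∃ e : ℕ, ∀ (x : X.carrier) (n : ℕ), X.R n x → ∃ m ∈ evalCode e n, Y.R m (f x)

/-- The terminal ω-set: one element, realized by every natural number. -/
def unitOmega : OmegaSet where
  carrier := PUnit
  R _ _ := True
  real_nonempty _ := ⟨0, trivial⟩

/-- The category of ω-sets does not have a countably infinite coproduct of the terminal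
object: there is no ω-set `P` with points `p n : 1 → P` (`n ∈ ℕ`) such that every
ℕ-indexed family of points of any ω-set `Y` factors through `P` by a unique morphism. -/
theorem omegaSet_no_countable_coproduct_of_unit :
    ¬ ∃ (P : OmegaSet) (p : ℕ → P.carrier),
      (∀ n : ℕ, IsMor unitOmega P fun _ => p n) ∧
      ∀ (Y : OmegaSet) (q : ℕ → Y.carrier), (∀ n : ℕ, IsMor unitOmega Y fun _ => q n) →
        ∃! f : P.carrier → Y.carrier, IsMor P Y f ∧ ∀ n : ℕ, f (p n) = q n := by
  classical
  rintro ⟨P, p, hp, huniv⟩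
  set Nω : OmegaSet := ⟨ℕ, fun n x => n = x, fun x => ⟨x, rfl⟩⟩ with hN
  have hq : ∀ g : ℕ → ℕ, ∀ n, IsMor unitOmega Nω fun _ => g n := by
    intro g n
    refine ⟨Encodable.encode (Nat.Partrec.Code.const (g n)), fun x m _ => ⟨g n, ?_, rfl⟩⟩
    simp [evalCode, Nat.Partrec.Code.eval_const]
  have key : ∀ g : ℕ → ℕ, ∃ e : ℕ, ∀ n r, P.R r (p n) → g n ∈ evalCode e r := by
    intro g
    obtain ⟨f, ⟨⟨e, he⟩, hpt⟩, -⟩ := huniv Nω g (hq g)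
    refine ⟨e, fun n r hr => ?_⟩
    obtain ⟨m, hm, hRm⟩ := he (p n) r hr
    have : m = g n := by
      have h2 : m = f (p n) := hRm
      rw [h2, hpt n]
    exact this ▸ hm
  choose E hE using key
  have hinj : Function.Injective E := by
    intro g h hgh
    funext n
    obtain ⟨r, hr⟩ := P.real_nonempty (p n)
    have h1 := hE g n r hr
    rw [hgh] at h1
    exact Part.mem_unique h1 (hE h n r hr)
  apply Function.cantor_injective (fun s : Set ℕ => E fun n => if n ∈ s then 1 else 0)
  intro s t hst
  have hft := hinj hst
  ext n
  have := congrFun hft n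
  constructor <;> intro hn <;> by_contra hc <;> simp [hn, hc] at this
end

section
/- An internal category A in a finitely complete category C is representably posetal (for every internal category X, the hom-category of internal functors X → A and internal natural transformations is a preorder) if and only if A is an internal poset, i.e., the pairing ⟨dom, cod⟩ : A₁ → A₀ × A₀ is a monomorphism. -/
/-!
A natural transformation `τ : F ⟹ G` is determined by its component `τ.app : X₀ ⟶ A₁`, whose
image under `⟨dom, cod⟩` is forced to be `⟨F₀, G₀⟩`; so if `⟨dom, cod⟩` is monic, parallel
transformations agree. Conversely, any two generalized elements `u, v : W ⟶ A₁` with the same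
domain and codomain are the components of two natural transformations between the same constant
functors out of the discrete internal category on `W`.
-/

open CategoryTheory CategoryTheory.Limits

universe v u

/-- A category internal to a category `C`, presented via its (generalized-element)
composition: objects-of-objects and objects-of-morphisms with domain, codomain, identity
and a natural composition of composable generalized elements, satisfying the usual
category axioms. -/
structure InternalCat (C : Type u) [Category.{v} C] where
  Obj : C
  Mor : C
  dom : Mor ⟶ Obj
  cod : Mor ⟶ Obj
  ident : Obj ⟶ Mor
  comp : ∀ {W : C} (g f : W ⟶ Mor), f ≫ cod = g ≫ dom → (W ⟶ Mor)
  ident_dom : ident ≫ dom = 𝟙 Obj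
  ident_cod : ident ≫ cod = 𝟙 Obj
  comp_dom : ∀ {W : C} (g f : W ⟶ Mor) (h : f ≫ cod = g ≫ dom), comp g f h ≫ dom = f ≫ dom
  comp_cod : ∀ {W : C} (g f : W ⟶ Mor) (h : f ≫ cod = g ≫ dom), comp g f h ≫ cod = g ≫ cod
  comp_natural : ∀ {W' W : C} (u : W' ⟶ W) (g f : W ⟶ Mor) (h : f ≫ cod = g ≫ dom),
    u ≫ comp g f h = comp (u ≫ g) (u ≫ f) (by rw [Category.assoc, Category.assoc, h])
  id_comp : ∀ {W : C} (f : W ⟶ Mor),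
    comp (f ≫ cod ≫ ident) f (by simp [ident_dom]) = f
  comp_id : ∀ {W : C} (f : W ⟶ Mor),
    comp f (f ≫ dom ≫ ident) (by simp [ident_cod]) = f
  assoc : ∀ {W : C} (h g f : W ⟶ Mor) (hg : g ≫ cod = h ≫ dom) (gf : f ≫ cod = g ≫ dom),
    comp (comp h g hg) f (by rw [comp_dom]; exact gf) =
      comp h (comp g f gf) (by rw [comp_cod]; exact hg)

/-- An internal functor between internal categories. -/
structure InternalFunctor {C : Type u} [Category.{v} C] (X A : InternalCat C) where
  f0 : X.Obj ⟶ A.Obj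
  f1 : X.Mor ⟶ A.Mor
  dom_comm : f1 ≫ A.dom = X.dom ≫ f0
  cod_comm : f1 ≫ A.cod = X.cod ≫ f0
  ident_comm : X.ident ≫ f1 = f0 ≫ A.ident
  comp_comm : ∀ {W : C} (g f : W ⟶ X.Mor) (h : f ≫ X.cod = g ≫ X.dom),
    X.comp g f h ≫ f1 = A.comp (g ≫ f1) (f ≫ f1)
      (by rw [Category.assoc, Category.assoc, cod_comm, dom_comm, ← Category.assoc,
        ← Category.assoc, h])

/-- An internal natural transformation between internal functors. -/
structure InternalNatTrans {C : Type u} [Category.{v} C] {X A : InternalCat C}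
    (F G : InternalFunctor X A) where
  app : X.Obj ⟶ A.Mor
  app_dom : app ≫ A.dom = F.f0
  app_cod : app ≫ A.cod = G.f0
  naturality :
    A.comp (G.f1) (X.dom ≫ app)
        (by rw [Category.assoc, app_cod, G.dom_comm]) =
      A.comp (X.cod ≫ app) (F.f1)
        (by rw [F.cod_comm, Category.assoc, app_dom])

theorem CategoryTheory.Limits.mono_prod_lift_iff_jointlyMono₂ {C : Type u} [Category.{v} C]
    {R X Y : C} [HasBinaryProduct X Y] (f : R ⟶ X) (g : R ⟶ Y) :
    Mono (prod.lift f g) ↔ JointlyMono₂ f g := by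
  constructor
  · intro _
    refine ⟨fun W u v hf hg => ?_⟩
    rw [← cancel_mono (prod.lift f g)]
    ext <;> simp [hf, hg]
  · intro h
    refine ⟨fun u v huv => h.right_cancellation u v ?_ ?_⟩
    · simpa only [Category.assoc, prod.lift_fst] using huv =≫ prod.fst
    · simpa only [Category.assoc, prod.lift_snd] using huv =≫ prod.snd

variable {C : Type u} [Category.{v} C]

@[ext]
theorem InternalNatTrans.ext {X A : InternalCat C} {F G : InternalFunctor X A}
    {τ τ' : InternalNatTrans F G} (h : τ.app = τ'.app) : τ = τ' := by
  cases τ; cases τ'; cases h; rfl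

namespace InternalCat

theorem comp_of_eq_cod_ident (A : InternalCat C) {W : C} (i f : W ⟶ A.Mor)
    (hi : i = f ≫ A.cod ≫ A.ident) (h : f ≫ A.cod = i ≫ A.dom) : A.comp i f h = f := by
  subst hi; exact A.id_comp f

theorem comp_of_eq_dom_ident (A : InternalCat C) {W : C} (f i : W ⟶ A.Mor)
    (hi : i = f ≫ A.dom ≫ A.ident) (h : i ≫ A.cod = f ≫ A.dom) : A.comp f i h = f := by
  subst hi; exact A.comp_id f

def discrete (W : C) : InternalCat C where
  Obj := W
  Mor := W
  dom := 𝟙 W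
  cod := 𝟙 W
  ident := 𝟙 W
  comp := fun _ f _ => f
  ident_dom := Category.id_comp _
  ident_cod := Category.id_comp _
  comp_dom := fun _ _ _ => rfl
  comp_cod := fun _ _ h => h
  comp_natural := fun _ _ _ _ => rfl
  id_comp := fun _ => rfl
  comp_id := fun f => by simp
  assoc := fun _ _ _ _ _ => rfl

end InternalCat

def InternalFunctor.const (A : InternalCat C) {W : C} (a : W ⟶ A.Obj) :
    InternalFunctor (InternalCat.discrete W) A where
  f0 := a
  f1 := a ≫ A.ident
  dom_comm := by simp [InternalCat.discrete, A.ident_dom]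
  cod_comm := by simp [InternalCat.discrete, A.ident_cod]
  ident_comm := Category.id_comp _
  comp_comm := by
    intro V g f h
    dsimp only [InternalCat.discrete] at f g h ⊢
    obtain rfl : f = g := by simpa using h
    refine (A.comp_of_eq_cod_ident _ _ ?_ _).symm
    simp [reassoc_of% A.ident_cod]

def InternalNatTrans.ofMor {A : InternalCat C} {W : C} {a b : W ⟶ A.Obj} (w : W ⟶ A.Mor)
    (hdom : w ≫ A.dom = a) (hcod : w ≫ A.cod = b) :
    InternalNatTrans (InternalFunctor.const A a) (InternalFunctor.const A b) where
  app := w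
  app_dom := hdom
  app_cod := hcod
  naturality := by
    refine (A.comp_of_eq_cod_ident _ _ ?_ _).trans (A.comp_of_eq_dom_ident _ _ ?_ _).symm
    · simp [InternalFunctor.const, InternalCat.discrete, ← hcod]
    · simp [InternalFunctor.const, InternalCat.discrete, ← hdom]

/-- An internal category `A` in a finitely complete category `C` is representably posetal
(every hom-category of internal functors into `A` and internal natural transformations is
a preorder) if and only if `A` is an internal poset, i.e. `⟨dom, cod⟩ : A₁ ⟶ A₀ × A₀` is a
monomorphism. -/
theorem representably_posetal_iff_internal_poset {C : Type u} [Category.{v} C]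
    [HasFiniteLimits C] (A : InternalCat C) :
    (∀ (X : InternalCat C) (F G : InternalFunctor X A)
      (τ τ' : InternalNatTrans F G), τ = τ') ↔
    Mono (prod.lift A.dom A.cod) := by
  rw [mono_prod_lift_iff_jointlyMono₂]
  constructor
  · intro hposetal
    refine ⟨fun W u v hdom hcod => ?_⟩
    exact congrArg InternalNatTrans.app <| hposetal _ _ _
      (InternalNatTrans.ofMor u rfl rfl) (InternalNatTrans.ofMor v hdom.symm hcod.symm)
  · intro hmono X F G τ τ'
    ext
    exact hmono.right_cancellation _ _ (τ.app_dom.trans τ'.app_dom.symm)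
      (τ.app_cod.trans τ'.app_cod.symm)
end
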